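/- Suppose n = |H| ≥ 3. Let T^g be the greedy query tree constructed for the rounded distribution π'. Then C(T^g, π) ≤ 108 · C* · ln( n · c_max / c_min ), where C* = min_T C(T, π) is the minimum cost over all query trees T whose leaves are H. In particular the approximation factor is independent of the distribution π. -/

import Mathlib

/-!
Work with the unnormalized Gini impurity `gini ν S = ∑_{x ≠ y ∈ S} ν x ν y`. A question of
shrinkage `Δ` at version space `S` removes exactly `ν(S) · Δ` of it, and shrinkage only grows with
the version space. Hence if no question reaches shrinkage-per-cost `r` on `S`, every tree
identifying `S` costs at least `gini S / r` there. Charging each greedy question against a fixed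
tree this way, the potential `log gini` falls by at least the fraction of impurity removed, so the
greedy tree costs at most `1 + log (gini H / g₀)` times that tree, where `g₀ = 2 ε²` bounds the
impurity of any two hypotheses under `π' ≥ ε`.

Passing from `π` to `π'` lowers no mass by more than a factor `3 / 2` and raises none by more
than `ε`. After pruning, the comparison tree asks fewer than `n` questions on every path, so the
raise costs at most `c_min`, which that tree pays anyway. Finally
`log (1 / (2 ε²)) ≤ 6 log (n c_max / c_min)`.
-/

open Finset

namespace ActiveLearning

variable {H A : Type*} {m : ℕ}

/-- The total mass of a weight function `v` on a finite set `S`. -/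
def mass (v : H → ℝ) (S : Finset H) : ℝ := ∑ s ∈ S, v s

/-- `v` restricted to `S` and normalized. -/
noncomputable def restrict [DecidableEq H] (v : H → ℝ) (S : Finset H) : H → ℝ :=
  fun h => if h ∈ S then v h / mass v S else 0

/-- The shrinkage `Δ` of a question `qi` on `(S, v)`. -/
noncomputable def shrink [Fintype A] [DecidableEq A] (qi : H → A)
    (S : Finset H) (v : H → ℝ) : ℝ :=
  mass v S - ∑ j : A, (mass v (S.filter fun s => qi s = j)) ^ 2 / mass v S

/-- The collision probability of a distribution `v`. -/
def CP [Fintype H] (v : H → ℝ) : ℝ := ∑ z : H, (v z) ^ 2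

/-- Query trees: internal nodes are questions (indexed by `Fin m`), branches are answers,
leaves are hypotheses. -/
inductive QTree (m : ℕ) (H A : Type*) : Type _
  | leaf : H → QTree m H A
  | node : Fin m → (A → QTree m H A) → QTree m H A

/-- Follow the answers of hypothesis `h` down the tree, returning the leaf reached. -/
def follow (q : Fin m → H → A) : QTree m H A → H → H
  | .leaf h', _ => h'
  | .node i ch, h => follow q (ch (q i h)) h

/-- The cost `c_T(h)`: sum of costs of the questions on the root-to-`h` path. -/
def pathCost (q : Fin m → H → A) (c : Fin m → ℝ) : QTree m H A → H → ℝ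
  | .leaf _, _ => 0
  | .node i ch, h => c i + pathCost q c (ch (q i h)) h

/-- The leaves of `T` include `S`: every `h ∈ S` is identified by `T`. -/
def ValidOn (q : Fin m → H → A) (T : QTree m H A) (S : Finset H) : Prop :=
  ∀ h ∈ S, follow q T h = h

/-- The expected cost `C(T, v)` of a query tree `T` under weights `v`. -/
noncomputable def treeCost [Fintype H] (q : Fin m → H → A) (c : Fin m → ℝ)
    (T : QTree m H A) (v : H → ℝ) : ℝ :=
  ∑ h : H, v h * pathCost q c T h

/-- The questions asked along the root-to-`h` path. -/
def pathQs (q : Fin m → H → A) : QTree m H A → H → List (Fin m)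
  | .leaf _, _ => []
  | .node i ch, h => i :: pathQs q (ch (q i h)) h

/-- `T` is a greedy query tree for `π` on version space `S`: at every node it asks a question
maximizing the shrinkage-cost ratio and recurses on each nonempty answer class. -/
inductive IsGreedy [Fintype A] [DecidableEq A] [DecidableEq H]
    (q : Fin m → H → A) (c : Fin m → ℝ) (π : H → ℝ) :
    QTree m H A → Finset H → Prop
  | leaf (h : H) : IsGreedy q c π (.leaf h) {h}
  | node (S : Finset H) (i : Fin m) (ch : A → QTree m H A)
      (hcard : 1 < S.card)
      (hmax : ∀ j : Fin m,
        shrink (q j) S (restrict π S) / c j ≤ shrink (q i) S (restrict π S) / c i)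
      (hch : ∀ a : A, (S.filter fun s => q i s = a).Nonempty →
        IsGreedy q c π (ch a) (S.filter fun s => q i s = a)) :
      IsGreedy q c π (.node i ch) S

/-- `T` is an `ε`-approximate greedy query tree for `π` on version space `S`. -/
inductive IsApproxGreedy [Fintype A] [DecidableEq A] [DecidableEq H]
    (ε : ℝ) (q : Fin m → H → A) (c : Fin m → ℝ) (π : H → ℝ) :
    QTree m H A → Finset H → Prop
  | leaf (h : H) : IsApproxGreedy ε q c π (.leaf h) {h}
  | node (S : Finset H) (i : Fin m) (ch : A → QTree m H A)
      (hcard : 1 < S.card)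
      (happrox : ∀ j : Fin m,
        (1 - ε) * (shrink (q j) S (restrict π S) / c j) ≤
          shrink (q i) S (restrict π S) / c i)
      (hch : ∀ a : A, (S.filter fun s => q i s = a).Nonempty →
        IsApproxGreedy ε q c π (ch a) (S.filter fun s => q i s = a)) :
      IsApproxGreedy ε q c π (.node i ch) S

/-- `T` is irreducible on version space `S`: every asked question strictly splits the
surviving set. -/
inductive Irreducible [DecidableEq A] (q : Fin m → H → A) :
    QTree m H A → Finset H → Prop
  | leaf (h : H) (S : Finset H) : Irreducible q (.leaf h) S
  | node (S : Finset H) (i : Fin m) (ch : A → QTree m H A)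
      (hsplit : ∃ s ∈ S, ∃ t ∈ S, q i s ≠ q i t)
      (hch : ∀ a : A, (S.filter fun s => q i s = a).Nonempty →
        Irreducible q (ch a) (S.filter fun s => q i s = a)) :
      Irreducible q (.node i ch) S

noncomputable def gini (ν : H → ℝ) (S : Finset H) : ℝ := mass ν S ^ 2 - ∑ h ∈ S, ν h ^ 2

section Mass

variable {ν : H → ℝ}

lemma mass_nonneg (hν : ∀ h, 0 ≤ ν h) (S : Finset H) : 0 ≤ mass ν S :=
  sum_nonneg fun h _ => hν h

lemma mass_pos (hν : ∀ h, 0 < ν h) {S : Finset H} (hS : S.Nonempty) : 0 < mass ν S :=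
  sum_pos (fun h _ => hν h) hS

lemma mass_mono (hν : ∀ h, 0 ≤ ν h) {V W : Finset H} (hVW : V ⊆ W) :
    mass ν V ≤ mass ν W :=
  sum_le_sum_of_subset_of_nonneg hVW fun h _ _ => hν h

lemma gini_nonneg (hν : ∀ h, 0 ≤ ν h) (S : Finset H) : 0 ≤ gini ν S :=
  sub_nonneg.2 (sum_sq_le_sq_sum_of_nonneg fun h _ => hν h)

lemma gini_insert [DecidableEq H] {a : H} {S : Finset H} (ha : a ∉ S) :
    gini ν (insert a S) = gini ν S + 2 * ν a * mass ν S := by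
  simp only [gini, mass, sum_insert ha]
  ring

lemma two_mul_sq_le_gini (hν : ∀ h, 0 ≤ ν h) {ε : ℝ} (hε : ∀ h, ε ≤ ν h) (hε0 : 0 ≤ ε)
    {S : Finset H} (hS : 1 < S.card) : 2 * ε ^ 2 ≤ gini ν S := by
  classical
  obtain ⟨x, hx, y, hy, hxy⟩ := one_lt_card.1 hS
  have hy' : ν y ≤ mass ν (S.erase x) :=
    single_le_sum (fun h _ => hν h) (mem_erase.2 ⟨Ne.symm hxy, hy⟩)
  rw [← insert_erase hx, gini_insert (notMem_erase x S)]
  nlinarith [gini_nonneg hν (S.erase x), hy', mul_le_mul (hε x) (hε y) hε0 (hν x), hν x]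

lemma gini_le_sq_mass (ν : H → ℝ) (S : Finset H) : gini ν S ≤ mass ν S ^ 2 :=
  sub_le_self _ (sum_nonneg fun _ _ => sq_nonneg _)

end Mass

lemma mul_div_add_le_mul_div_add {x y x' y' : ℝ} (hx : 0 ≤ x) (hy : 0 ≤ y) (hxx' : x ≤ x')
    (hyy' : y ≤ y') : x * y / (x + y) ≤ x' * y' / (x' + y') := by
  rcases (add_nonneg hx hy).eq_or_lt with h0 | hpos
  · rw [← h0, div_zero]
    exact div_nonneg (mul_nonneg (hx.trans hxx') (hy.trans hyy')) (by linarith)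
  · rw [div_le_div_iff₀ hpos (by linarith)]
    nlinarith [mul_le_mul_of_nonneg_left hxx' (mul_nonneg hy (hy.trans hyy')),
      mul_le_mul_of_nonneg_left hyy' (mul_nonneg hx (hx.trans hxx'))]

lemma mass_fiber_add_mass_compl [DecidableEq A] (ν : H → ℝ) (qi : H → A) (S : Finset H)
    (a : A) :
    mass ν (S.filter fun s => qi s = a) + mass ν (S.filter fun s => qi s ≠ a) = mass ν S :=
  sum_filter_add_sum_filter_not S _ ν

section Shrink

variable [Fintype A] [DecidableEq A] {ν : H → ℝ}

lemma sum_mass_fiber (ν : H → ℝ) (qi : H → A) (S : Finset H) :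
    ∑ a : A, mass ν (S.filter fun s => qi s = a) = mass ν S :=
  sum_fiberwise S qi ν

lemma shrink_eq_sum (ν : H → ℝ) (qi : H → A) (S : Finset H) :
    shrink qi S ν = ∑ a : A, mass ν (S.filter fun s => qi s = a) *
      mass ν (S.filter fun s => qi s ≠ a) /
        (mass ν (S.filter fun s => qi s = a) + mass ν (S.filter fun s => qi s ≠ a)) := by
  simp only [mass_fiber_add_mass_compl, ← sum_div]
  have hcompl : ∀ a, mass ν (S.filter fun s => qi s ≠ a) =
      mass ν S - mass ν (S.filter fun s => qi s = a) := fun a => by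
    rw [← mass_fiber_add_mass_compl ν qi S a]; ring
  simp only [hcompl, mul_sub, sum_sub_distrib, ← sum_mul, sum_mass_fiber, shrink, sub_div,
    ← sum_div, sq]
  rcases eq_or_ne (mass ν S) 0 with h0 | h0
  · simp [h0]
  · rw [mul_div_cancel_right₀ _ h0]

/-- In the form `shrink_eq_sum`, each summand `m * r / (m + r)` grows with the mass `m` of an
answer class and the mass `r` outside it, and both grow with the version space. -/
lemma shrink_mono (hν : ∀ h, 0 ≤ ν h) (qi : H → A) {V W : Finset H} (hVW : V ⊆ W) :
    shrink qi V ν ≤ shrink qi W ν := by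
  rw [shrink_eq_sum, shrink_eq_sum]
  exact sum_le_sum fun a _ => mul_div_add_le_mul_div_add (mass_nonneg hν _) (mass_nonneg hν _)
    (mass_mono hν (filter_subset_filter _ hVW)) (mass_mono hν (filter_subset_filter _ hVW))

lemma shrink_nonneg (hν : ∀ h, 0 ≤ ν h) (qi : H → A) (S : Finset H) : 0 ≤ shrink qi S ν := by
  simpa [shrink, mass] using shrink_mono hν qi (empty_subset S)

lemma gini_eq_sum_gini_fiber_add (hν : ∀ h, 0 < ν h) (qi : H → A) (S : Finset H) :
    gini ν S = ∑ a : A, gini ν (S.filter fun s => qi s = a) + mass ν S * shrink qi S ν := by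
  rcases S.eq_empty_or_nonempty with rfl | hS
  · simp [gini, mass, shrink]
  have hmul : mass ν S * shrink qi S ν =
      mass ν S ^ 2 - ∑ a : A, mass ν (S.filter fun s => qi s = a) ^ 2 := by
    rw [shrink, mul_sub, ← sum_div, mul_div_cancel₀ _ (mass_pos hν hS).ne', sq]
  rw [hmul, gini]
  simp only [gini, sum_sub_distrib, sum_fiberwise S qi fun h => ν h ^ 2]
  ring

variable [DecidableEq H]

lemma mass_restrict_of_subset (ν : H → ℝ) {S W : Finset H} (hW : W ⊆ S) :
    mass (restrict ν S) W = mass ν W / mass ν S := by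
  rw [mass, mass, sum_div]
  exact sum_congr rfl fun w hw => if_pos (hW hw)

lemma shrink_restrict (hν : ∀ h, 0 < ν h) {S : Finset H} (hS : S.Nonempty) (qi : H → A) :
    shrink qi S (restrict ν S) = shrink qi S ν / mass ν S := by
  have hM := (mass_pos hν hS).ne'
  simp only [shrink, mass_restrict_of_subset ν (filter_subset _ S),
    mass_restrict_of_subset ν (subset_refl S), div_self hM, div_one, sub_div, sum_div, div_pow]
  congr 1
  field_simp

end Shrink

noncomputable def partialCost (q : Fin m → H → A) (c : Fin m → ℝ) (T : QTree m H A)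
    (ν : H → ℝ) (S : Finset H) : ℝ :=
  ∑ h ∈ S, ν h * pathCost q c T h

section Trees

variable {q : Fin m → H → A} {c : Fin m → ℝ} {ν : H → ℝ}

lemma pathCost_nonneg (hc : ∀ i, 0 ≤ c i) (T : QTree m H A) (h : H) :
    0 ≤ pathCost q c T h := by
  induction T with
  | leaf => exact le_rfl
  | node i ch ih => exact add_nonneg (hc i) (ih _)

lemma partialCost_nonneg (hc : ∀ i, 0 ≤ c i) (hν : ∀ h, 0 ≤ ν h) (T : QTree m H A)
    (S : Finset H) : 0 ≤ partialCost q c T ν S :=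
  sum_nonneg fun h _ => mul_nonneg (hν h) (pathCost_nonneg hc T h)

lemma ValidOn.mono {T : QTree m H A} {S V : Finset H} (hT : ValidOn q T S) (hVS : V ⊆ S) :
    ValidOn q T V :=
  fun h hh => hT h (hVS hh)

lemma ValidOn.subset_singleton {h₀ : H} {S : Finset H} (hT : ValidOn q (.leaf h₀) S) :
    S ⊆ {h₀} :=
  fun h hh => mem_singleton.2 (hT h hh).symm

lemma ValidOn.child [DecidableEq A] {i : Fin m} {ch : A → QTree m H A} {S : Finset H}
    (hT : ValidOn q (.node i ch) S) (a : A) :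
    ValidOn q (ch a) (S.filter fun s => q i s = a) := fun h hh => by
  obtain ⟨hhS, rfl⟩ := mem_filter.1 hh
  exact hT h hhS

variable [Fintype A] [DecidableEq A]

lemma partialCost_eq_sum_fiber (T : QTree m H A) (i : Fin m) (S : Finset H) :
    partialCost q c T ν S = ∑ a : A, partialCost q c T ν (S.filter fun s => q i s = a) :=
  (sum_fiberwise S (q i) _).symm

lemma partialCost_node (i : Fin m) (ch : A → QTree m H A) (S : Finset H) :
    partialCost q c (.node i ch) ν S =
      mass ν S * c i + ∑ a : A, partialCost q c (ch a) ν (S.filter fun s => q i s = a) := by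
  simp only [partialCost, pathCost, mul_add, sum_add_distrib, mass, sum_mul]
  congr 1
  rw [← sum_fiberwise S (q i)]
  exact sum_congr rfl fun a _ => sum_congr rfl fun h hh => by rw [(mem_filter.1 hh).2]

/-- A question asked at version space `W` removes `mass ν W * shrink` of the impurity, and its
shrinkage on `W ⊆ V` is at most its shrinkage on `V`. -/
lemma gini_le_mul_partialCost (hν : ∀ h, 0 < ν h) {r : ℝ} :
    ∀ (T : QTree m H A) (V : Finset H), ValidOn q T V →
      (∀ j, shrink (q j) V ν ≤ r * c j) → gini ν V ≤ r * partialCost q c T ν V := by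
  intro T
  induction T with
  | leaf h₀ =>
    intro V hT _
    rcases subset_singleton_iff.1 hT.subset_singleton with rfl | rfl <;>
      simp [gini, mass, partialCost, pathCost]
  | node i ch ih =>
    intro V hT hr
    have hfiber : ∀ a, gini ν (V.filter fun s => q i s = a) ≤
        r * partialCost q c (ch a) ν (V.filter fun s => q i s = a) := fun a =>
      ih a _ (hT.child a) fun j =>
        (shrink_mono (fun h => (hν h).le) _ (filter_subset _ _)).trans (hr j)
    calc gini ν V
        = ∑ a : A, gini ν (V.filter fun s => q i s = a) + mass ν V * shrink (q i) V ν :=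
          gini_eq_sum_gini_fiber_add hν (q i) V
      _ ≤ ∑ a : A, r * partialCost q c (ch a) ν (V.filter fun s => q i s = a) +
            mass ν V * (r * c i) :=
          add_le_add (sum_le_sum fun a _ => hfiber a)
            (mul_le_mul_of_nonneg_left (hr i) (mass_nonneg (fun h => (hν h).le) V))
      _ = r * partialCost q c (.node i ch) ν V := by
          rw [partialCost_node, ← mul_sum]
          ring

lemma mass_mul_cost_mul_gini_le (hν : ∀ h, 0 < ν h) (hc : ∀ j, 0 < c j) {T : QTree m H A}
    {S : Finset H} (hT : ValidOn q T S) {i : Fin m}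
    (hmax : ∀ j, shrink (q j) S ν / c j ≤ shrink (q i) S ν / c i) :
    mass ν S * c i * gini ν S ≤ partialCost q c T ν S * (mass ν S * shrink (q i) S ν) := by
  set r := shrink (q i) S ν / c i
  have hgini : gini ν S ≤ r * partialCost q c T ν S :=
    gini_le_mul_partialCost hν T S hT fun j => (div_le_iff₀ (hc j)).1 (hmax j)
  calc mass ν S * c i * gini ν S ≤ mass ν S * c i * (r * partialCost q c T ν S) :=
        mul_le_mul_of_nonneg_left hgini
          (mul_nonneg (mass_nonneg (fun h => (hν h).le) S) (hc i).le)
    _ = partialCost q c T ν S * (mass ν S * shrink (q i) S ν) := by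
        simp only [r]
        field_simp [(hc i).ne']

end Trees

lemma log_add_sub_div_le_log {x y z : ℝ} (hx : 0 < x) (hxy : x ≤ y) (hyz : y ≤ z) :
    Real.log x + (z - y) / z ≤ Real.log z := by
  have hy : 0 < y := hx.trans_le hxy
  have hz : 0 < z := hy.trans_le hyz
  have hlog := Real.log_le_sub_one_of_pos (div_pos hy hz)
  rw [Real.log_div hy.ne' hz.ne'] at hlog
  have hdiv : (z - y) / z = 1 - y / z := by field_simp
  linarith [Real.log_le_log hx hxy]

section Greedy

variable [Fintype A] [DecidableEq A] [DecidableEq H]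
  {q : Fin m → H → A} {c : Fin m → ℝ} {ν : H → ℝ}

lemma partialCost_eq_zero_of_card_le_one {Tg : QTree m H A} {S : Finset H}
    (hTg : S.Nonempty → IsGreedy q c ν Tg S) (hS : S.card ≤ 1) : partialCost q c Tg ν S = 0 := by
  rcases S.eq_empty_or_nonempty with rfl | hne
  · simp [partialCost]
  cases hTg hne with
  | leaf => simp [partialCost, pathCost]
  | node _ _ _ hcard => omega

lemma shrink_div_le_of_greedy (hν : ∀ h, 0 < ν h) {S : Finset H} (hS : S.Nonempty) {i : Fin m}
    (hmax : ∀ j : Fin m,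
      shrink (q j) S (restrict ν S) / c j ≤ shrink (q i) S (restrict ν S) / c i) (j : Fin m) :
    shrink (q j) S ν / c j ≤ shrink (q i) S ν / c i := by
  have hj := hmax j
  rw [shrink_restrict hν hS, shrink_restrict hν hS, div_right_comm,
    div_right_comm (shrink (q i) S ν)] at hj
  exact (div_le_div_iff_of_pos_right (mass_pos hν hS)).1 hj

lemma mass_mul_cost_le_of_greedy (hν : ∀ h, 0 < ν h) (hc : ∀ j, 0 < c j) {T : QTree m H A}
    {S : Finset H} (hT : ValidOn q T S) (hG : 0 < gini ν S) {i : Fin m}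
    (hmax : ∀ j : Fin m,
      shrink (q j) S (restrict ν S) / c j ≤ shrink (q i) S (restrict ν S) / c i) :
    mass ν S * c i ≤ partialCost q c T ν S *
      ((gini ν S - ∑ a : A, gini ν (S.filter fun s => q i s = a)) / gini ν S) := by
  have hS : S.Nonempty := nonempty_iff_ne_empty.2 fun h => by simp [h, gini, mass] at hG
  rw [mul_div_assoc', le_div_iff₀ hG, gini_eq_sum_gini_fiber_add hν (q i) S, add_sub_cancel_left,
    ← gini_eq_sum_gini_fiber_add hν (q i) S]
  exact mass_mul_cost_mul_gini_le hν hc hT (shrink_div_le_of_greedy hν hS hmax)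

/-- Along each greedy question the potential `log gini` drops by at least the fraction of
impurity removed (`log x ≤ x - 1`), and that fraction pays for the question. -/
theorem partialCost_greedy_le (hc : ∀ i, 0 < c i) (hν : ∀ h, 0 < ν h) {g₀ : ℝ} (hg₀ : 0 < g₀)
    (hG : ∀ S : Finset H, 1 < S.card → g₀ ≤ gini ν S) {T Tg : QTree m H A} {S : Finset H}
    (hTg : IsGreedy q c ν Tg S) (hT : ValidOn q T S) (hS : 1 < S.card) :
    partialCost q c Tg ν S ≤
      partialCost q c T ν S * (Real.log (gini ν S) - Real.log g₀ + 1) := by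
  have hν0 : ∀ h, 0 ≤ ν h := fun h => (hν h).le
  have hc0 : ∀ i, 0 ≤ c i := fun i => (hc i).le
  induction hTg with
  | leaf => simp at hS
  | node S i ch hcard hmax hch ih =>
    set G := gini ν S
    set G' := ∑ a : A, gini ν (S.filter fun s => q i s = a)
    have hGpos : 0 < G := hg₀.trans_le (hG S hcard)
    have hG'G : G' ≤ G := by
      linarith [gini_eq_sum_gini_fiber_add hν (q i) S,
        mul_nonneg (mass_nonneg hν0 S) (shrink_nonneg hν0 (q i) S)]
    set β := Real.log G - Real.log g₀ + 1 - (G - G') / G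
    have hβ : 0 ≤ β := by
      have hG'0 : 0 ≤ G' := sum_nonneg fun a _ => gini_nonneg hν0 _
      have : (G - G') / G ≤ 1 := (div_le_one hGpos).2 (by linarith)
      linarith [Real.log_le_log hg₀ (hG S hcard)]
    have hfiber : ∀ a, partialCost q c (ch a) ν (S.filter fun s => q i s = a) ≤
        partialCost q c T ν (S.filter fun s => q i s = a) * β := by
      intro a
      set Sa := S.filter fun s => q i s = a
      by_cases ha : 1 < Sa.card
      · have hGa : gini ν Sa ≤ G' :=
          single_le_sum (f := fun a => gini ν (S.filter fun s => q i s = a))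
            (fun b _ => gini_nonneg hν0 _) (mem_univ a)
        have hlog := log_add_sub_div_le_log (hg₀.trans_le (hG Sa ha)) hGa hG'G
        calc partialCost q c (ch a) ν Sa
            ≤ partialCost q c T ν Sa * (Real.log (gini ν Sa) - Real.log g₀ + 1) :=
              ih a (card_pos.1 (zero_lt_one.trans ha)) (hT.mono (filter_subset _ _)) ha
          _ ≤ partialCost q c T ν Sa * β :=
              mul_le_mul_of_nonneg_left (by linarith) (partialCost_nonneg hc0 hν0 T Sa)
      · rw [partialCost_eq_zero_of_card_le_one (hch a) (not_lt.1 ha)]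
        exact mul_nonneg (partialCost_nonneg hc0 hν0 T Sa) hβ
    calc partialCost q c (.node i ch) ν S
        = mass ν S * c i + ∑ a : A, partialCost q c (ch a) ν (S.filter fun s => q i s = a) :=
          partialCost_node i ch S
      _ ≤ partialCost q c T ν S * ((G - G') / G) +
            ∑ a : A, partialCost q c T ν (S.filter fun s => q i s = a) * β :=
          add_le_add (mass_mul_cost_le_of_greedy hν hc hT hGpos hmax)
            (sum_le_sum fun a _ => hfiber a)
      _ = partialCost q c T ν S * (Real.log G - Real.log g₀ + 1) := by
          rw [← sum_mul, ← partialCost_eq_sum_fiber]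
          ring

end Greedy

section Pruning

variable [DecidableEq A] {q : Fin m → H → A} {c : Fin m → ℝ}

/-- Pruning the questions that do not split the current version space makes every question
split, so no path is longer than `|S| - 1` questions. -/
lemma exists_validOn_pathCost_le (hc : ∀ i, 0 ≤ c i) {cmax : ℝ} (hcmax : ∀ i, c i ≤ cmax) :
    ∀ (T : QTree m H A) (S : Finset H), ValidOn q T S →
      ∃ T' : QTree m H A, ValidOn q T' S ∧ ∀ h ∈ S,
        pathCost q c T' h ≤ pathCost q c T h ∧ pathCost q c T' h ≤ cmax * (S.card - 1) := by
  intro T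
  induction T with
  | leaf h₀ =>
    intro S hT
    refine ⟨.leaf h₀, hT, fun h hh => ⟨le_rfl, ?_⟩⟩
    obtain rfl : S = {h₀} :=
      (subset_singleton_iff.1 hT.subset_singleton).resolve_left (ne_empty_of_mem hh)
    simp [pathCost]
  | node i ch ih =>
    intro S hT
    by_cases hsplit : ∃ s ∈ S, ∃ t ∈ S, q i s ≠ q i t
    · choose T' hT' using fun a => ih a _ (hT.child a)
      refine ⟨.node i T', fun h hh => (hT' (q i h)).1 h (mem_filter.2 ⟨hh, rfl⟩),
        fun h hh => ?_⟩
      obtain ⟨hle, hdepth⟩ := (hT' (q i h)).2 h (mem_filter.2 ⟨hh, rfl⟩)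
      have hlt : (S.filter fun s => q i s = q i h).card < S.card := by
        refine card_lt_card (filter_ssubset.2 ?_)
        obtain ⟨s, hs, t, ht, hst⟩ := hsplit
        by_cases hsh : q i s = q i h
        · exact ⟨t, ht, fun hth => hst (hsh.trans hth.symm)⟩
        · exact ⟨s, hs, hsh⟩
      have hltR : ((S.filter fun s => q i s = q i h).card : ℝ) ≤ S.card - 1 := by
        rw [le_sub_iff_add_le]
        exact_mod_cast hlt
      refine ⟨add_le_add le_rfl hle, ?_⟩
      calc c i + pathCost q c (T' (q i h)) h
          ≤ cmax + cmax * ((S.filter fun s => q i s = q i h).card - 1) :=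
            add_le_add (hcmax i) hdepth
        _ = cmax * (S.filter fun s => q i s = q i h).card := by ring
        _ ≤ cmax * (S.card - 1) := mul_le_mul_of_nonneg_left hltR ((hc i).trans (hcmax i))
    · push Not at hsplit
      rcases S.eq_empty_or_nonempty with rfl | ⟨s₀, hs₀⟩
      · exact ⟨.node i ch, hT, by simp⟩
      have hfiber : (S.filter fun s => q i s = q i s₀) = S :=
        filter_true_of_mem fun s hs => hsplit s hs s₀ hs₀
      obtain ⟨T', hT'valid, hT'cost⟩ := ih (q i s₀) S (hfiber ▸ hT.child (q i s₀))
      refine ⟨T', hT'valid, fun h hh => ?_⟩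
      obtain ⟨hle, hdepth⟩ := hT'cost h hh
      refine ⟨hle.trans ?_, hdepth⟩
      rw [pathCost, hsplit h hh s₀ hs₀]
      exact le_add_of_nonneg_left (hc i)

end Pruning

lemma ValidOn.le_pathCost {q : Fin m → H → A} {c : Fin m → ℝ} (hc : ∀ i, 0 ≤ c i) {b : ℝ}
    (hb : ∀ i, b ≤ c i) {T : QTree m H A} {S : Finset H} (hT : ValidOn q T S)
    (hS : 1 < S.card) (h : H) : b ≤ pathCost q c T h := by
  cases T with
  | leaf => exact absurd (card_le_card hT.subset_singleton) (by simpa using hS)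
  | node i ch => exact le_add_of_le_of_nonneg (hb i) (pathCost_nonneg hc _ h)

section TreeCost

variable [Fintype H] {q : Fin m → H → A} {c : Fin m → ℝ}

lemma treeCost_le_mul (hc : ∀ i, 0 ≤ c i) (T : QTree m H A) {v w : H → ℝ} {k : ℝ}
    (hvw : ∀ h, v h ≤ k * w h) : treeCost q c T v ≤ k * treeCost q c T w := by
  rw [treeCost, treeCost, mul_sum]
  exact sum_le_sum fun h _ => by
    rw [← mul_assoc]; exact mul_le_mul_of_nonneg_right (hvw h) (pathCost_nonneg hc T h)

lemma treeCost_le_add (hc : ∀ i, 0 ≤ c i) (T : QTree m H A) {v w : H → ℝ} {ε D : ℝ}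
    (hvw : ∀ h, v h ≤ w h + ε) (hε : 0 ≤ ε) (hD : ∀ h, pathCost q c T h ≤ D) :
    treeCost q c T v ≤ treeCost q c T w + ε * (Fintype.card H * D) := by
  have hsum : ∑ h : H, pathCost q c T h ≤ Fintype.card H * D := by
    simpa using sum_le_sum fun h (_ : h ∈ univ) => hD h
  calc treeCost q c T v ≤ ∑ h : H, (w h * pathCost q c T h + ε * pathCost q c T h) :=
        sum_le_sum fun h _ => by
          rw [← add_mul]; exact mul_le_mul_of_nonneg_right (hvw h) (pathCost_nonneg hc T h)
    _ ≤ treeCost q c T w + ε * (Fintype.card H * D) := by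
        rw [sum_add_distrib, ← mul_sum]
        exact add_le_add le_rfl (mul_le_mul_of_nonneg_left hsum hε)

lemma treeCost_le_treeCost {T' T : QTree m H A} {v : H → ℝ} (hv : ∀ h, 0 ≤ v h)
    (hTT' : ∀ h, pathCost q c T' h ≤ pathCost q c T h) :
    treeCost q c T' v ≤ treeCost q c T v :=
  sum_le_sum fun h _ => mul_le_mul_of_nonneg_left (hTT' h) (hv h)

lemma le_treeCost {T : QTree m H A} {v : H → ℝ} (hv : ∀ h, 0 ≤ v h) (hv1 : ∑ h, v h = 1)
    {b : ℝ} (hb : ∀ h, b ≤ pathCost q c T h) : b ≤ treeCost q c T v := by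
  calc b = ∑ h, v h * b := by rw [← sum_mul, hv1, one_mul]
    _ ≤ treeCost q c T v := sum_le_sum fun h _ => mul_le_mul_of_nonneg_left (hb h) (hv h)

/-- Pruning keeps every path shorter than `n` questions, so raising each mass by at most `ε`
costs at most `ε * n * cmax * (n - 1) ≤ cmin`, which any tree pays on its own. -/
lemma exists_validOn_treeCost_le_two_mul [DecidableEq A] (hc : ∀ i, 0 ≤ c i) {cmin cmax : ℝ}
    (hcmin : ∀ i, cmin ≤ c i) (hcmax : ∀ i, c i ≤ cmax) {π π' : H → ℝ} (hπ : ∀ h, 0 ≤ π h)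
    (hπ1 : ∑ h, π h = 1) {ε : ℝ} (hε : 0 ≤ ε) (hπ' : ∀ h, π' h ≤ π h + ε)
    (hεc : ε * (Fintype.card H * (cmax * (Fintype.card H - 1))) ≤ cmin)
    (hH : 1 < Fintype.card H) {T : QTree m H A} (hT : ValidOn q T univ) :
    ∃ T' : QTree m H A, ValidOn q T' univ ∧ treeCost q c T' π' ≤ 2 * treeCost q c T π := by
  obtain ⟨T', hT'valid, hT'cost⟩ := exists_validOn_pathCost_le hc hcmax T univ hT
  refine ⟨T', hT'valid, ?_⟩
  have hadd := treeCost_le_add hc T' hπ' hε fun h => (hT'cost h (mem_univ h)).2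
  have hmin := le_treeCost hπ hπ1 fun h =>
    hT'valid.le_pathCost hc hcmin (by rwa [card_univ]) h
  have hle := treeCost_le_treeCost (v := π) hπ fun h => (hT'cost h (mem_univ h)).1
  rw [card_univ] at hadd
  linarith

end TreeCost

section Rounding

variable [Fintype H] {π : H → ℝ} {ε : ℝ}

noncomputable def roundingDeficit (π : H → ℝ) (ε : ℝ) : ℝ :=
  ∑ h ∈ univ.filter (fun h => π h < ε), (ε - π h)

variable [DecidableEq H] {h₀ : H}

/-- The paper's rounded distribution `π'`, with `h₀` in the role of `h_j`. -/
noncomputable def roundUp (π : H → ℝ) (ε : ℝ) (h₀ : H) (h : H) : ℝ :=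
  (if π h < ε then ε else π h) - (if h = h₀ then roundingDeficit π ε else 0)

omit [DecidableEq H] in
lemma roundingDeficit_le (hπ : ∀ h, 0 ≤ π h) (hε : 0 ≤ ε) :
    roundingDeficit π ε ≤ Fintype.card H * ε := by
  calc roundingDeficit π ε ≤ ∑ _h ∈ univ.filter (fun h => π h < ε), ε :=
        sum_le_sum fun h _ => sub_le_self ε (hπ h)
    _ ≤ Fintype.card H * ε := by
        rw [sum_const, nsmul_eq_mul]
        exact mul_le_mul_of_nonneg_right (by exact_mod_cast card_filter_le _ _) hε

lemma sum_roundUp : ∑ h, roundUp π ε h₀ h = ∑ h, π h := by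
  have hup : ∀ h, (if π h < ε then ε else π h) = π h + if π h < ε then ε - π h else 0 :=
    fun h => by split_ifs <;> ring
  simp only [roundUp, roundingDeficit, sum_sub_distrib, hup, sum_add_distrib, sum_ite_eq',
    mem_univ, if_true, ← sum_filter]
  ring

lemma roundUp_of_ne {h : H} (hh : h ≠ h₀) : roundUp π ε h₀ h = if π h < ε then ε else π h := by
  simp [roundUp, hh]

lemma roundUp_self (hh₀ : ε ≤ π h₀) : roundUp π ε h₀ h₀ = π h₀ - roundingDeficit π ε := by
  simp [roundUp, not_lt.2 hh₀]

lemma roundUp_le_add (hπ : ∀ h, 0 ≤ π h) (hε : 0 ≤ ε) (h : H) : roundUp π ε h₀ h ≤ π h + ε := by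
  have hD : 0 ≤ roundingDeficit π ε := sum_nonneg fun h hh => sub_nonneg.2 (mem_filter.1 hh).2.le
  unfold roundUp
  split_ifs <;> linarith [hπ h]

omit [DecidableEq H] in
lemma le_of_three_mul_card_mul_le (hε : 0 ≤ ε) (hh₀ : 3 * Fintype.card H * ε ≤ π h₀) :
    ε ≤ π h₀ := by
  have hN : (1 : ℝ) ≤ Fintype.card H := by exact_mod_cast Fintype.card_pos_iff.2 ⟨h₀⟩
  nlinarith

lemma le_roundUp (hπ : ∀ h, 0 ≤ π h) (hε : 0 ≤ ε) (hh₀ : 3 * Fintype.card H * ε ≤ π h₀)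
    (h : H) : ε ≤ roundUp π ε h₀ h := by
  rcases eq_or_ne h h₀ with rfl | hne
  · have hN : (1 : ℝ) ≤ Fintype.card H := by exact_mod_cast Fintype.card_pos_iff.2 ⟨h⟩
    rw [roundUp_self (le_of_three_mul_card_mul_le hε hh₀)]
    nlinarith [roundingDeficit_le hπ hε]
  · rw [roundUp_of_ne hne]
    split_ifs with hlt
    · exact le_rfl
    · exact not_lt.1 hlt

lemma le_three_halves_mul_roundUp (hπ : ∀ h, 0 ≤ π h) (hε : 0 ≤ ε)
    (hh₀ : 3 * Fintype.card H * ε ≤ π h₀) (h : H) : π h ≤ 3 / 2 * roundUp π ε h₀ h := by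
  rcases eq_or_ne h h₀ with rfl | hne
  · rw [roundUp_self (le_of_three_mul_card_mul_le hε hh₀)]
    linarith [roundingDeficit_le hπ hε]
  · rw [roundUp_of_ne hne]
    split_ifs with hlt <;> linarith [hπ h]

end Rounding

theorem treeCost_greedy_le [Fintype H] [Fintype A] [DecidableEq A] [DecidableEq H]
    {q : Fin m → H → A} {c : Fin m → ℝ} {ν : H → ℝ} (hc : ∀ i, 0 < c i) (hν1 : ∑ h, ν h = 1)
    {ε : ℝ} (hε : 0 < ε) (hεν : ∀ h, ε ≤ ν h) (hH : 1 < Fintype.card H) {T Tg : QTree m H A}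
    (hTg : IsGreedy q c ν Tg univ) (hT : ValidOn q T univ) :
    treeCost q c Tg ν ≤ treeCost q c T ν * (1 - Real.log (2 * ε ^ 2)) := by
  have hν : ∀ h, 0 < ν h := fun h => hε.trans_le (hεν h)
  have hG : ∀ S : Finset H, 1 < S.card → 2 * ε ^ 2 ≤ gini ν S := fun S hS =>
    two_mul_sq_le_gini (fun h => (hν h).le) hεν hε.le hS
  have hgini : gini ν univ ≤ 1 := by simpa [mass, hν1] using gini_le_sq_mass ν univ
  have hlog : Real.log (gini ν univ) ≤ 0 :=
    Real.log_nonpos (gini_nonneg (fun h => (hν h).le) _) hgini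
  calc treeCost q c Tg ν
      ≤ treeCost q c T ν * (Real.log (gini ν univ) - Real.log (2 * ε ^ 2) + 1) :=
        partialCost_greedy_le hc hν (by positivity) hG hTg hT (by simpa using hH)
    _ ≤ treeCost q c T ν * (1 - Real.log (2 * ε ^ 2)) :=
        mul_le_mul_of_nonneg_left (by linarith)
          (partialCost_nonneg (fun i => (hc i).le) (fun h => (hν h).le) T univ)

section Numerics

variable {N a b : ℝ} (hN : 3 ≤ N) (ha : 0 < a) (hab : a ≤ b)
include hN ha hab

lemma three_mul_mul_div_le_inv : 3 * N * (a / (b * N ^ 3)) ≤ 1 / N := by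
  have hb : 0 < b := ha.trans_le hab
  have hN3 : 3 * N ^ 2 ≤ N ^ 3 := by nlinarith
  have key : a * (3 * N ^ 2) ≤ b * N ^ 3 := mul_le_mul hab hN3 (by positivity) hb.le
  rw [mul_div_assoc', div_le_div_iff₀ (by positivity) (by positivity)]
  linarith

lemma div_mul_mul_sub_one_le : a / (b * N ^ 3) * (N * (b * (N - 1))) ≤ a := by
  have hb : 0 < b := ha.trans_le hab
  have hN3 : N * (N - 1) ≤ N ^ 3 := by
    nlinarith [mul_le_mul hN hN (by norm_num) (by linarith : (0 : ℝ) ≤ N)]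
  have key := mul_le_mul_of_nonneg_left hN3 (mul_pos ha hb).le
  rw [div_mul_eq_mul_div, div_le_iff₀ (by positivity)]
  linarith

lemma one_le_log_mul_div : 1 ≤ Real.log (N * b / a) := by
  have hX : 3 ≤ N * b / a := by
    rw [le_div_iff₀ ha]; nlinarith
  rw [Real.le_log_iff_exp_le (by linarith)]
  linarith [Real.exp_one_lt_d9]

lemma one_sub_log_two_mul_sq_le :
    1 - Real.log (2 * (a / (b * N ^ 3)) ^ 2) ≤ 7 * Real.log (N * b / a) := by
  have hb : 0 < b := ha.trans_le hab
  have hlogX := one_le_log_mul_div hN ha hab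
  have hinv : (b * N ^ 3) / a ≤ (N * b / a) ^ 3 := by
    rw [div_pow, div_le_div_iff₀ ha (by positivity)]
    have hsq : a ^ 2 ≤ b ^ 2 := pow_le_pow_left₀ ha.le hab 2
    nlinarith [mul_le_mul_of_nonneg_left hsq (by positivity : (0 : ℝ) ≤ N ^ 3 * a * b)]
  have hlog_inv : Real.log ((b * N ^ 3) / a) ≤ 3 * Real.log (N * b / a) := by
    calc Real.log ((b * N ^ 3) / a) ≤ Real.log ((N * b / a) ^ 3) :=
          Real.log_le_log (by positivity) hinv
      _ = 3 * Real.log (N * b / a) := by rw [Real.log_pow]; norm_num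
  have hsplit : Real.log (2 * (a / (b * N ^ 3)) ^ 2) =
      Real.log 2 - 2 * Real.log ((b * N ^ 3) / a) := by
    rw [Real.log_mul two_ne_zero (by positivity), Real.log_pow, ← inv_div, Real.log_inv]
    push_cast; ring
  linarith [Real.log_nonneg (one_le_two : (1 : ℝ) ≤ 2)]

end Numerics

theorem rounded_greedy_cost_bound_general [Fintype H] [Fintype A] [DecidableEq H] [DecidableEq A]
    (π : H → ℝ) (hπpos : ∀ h, 0 < π h) (hπsum : ∑ h : H, π h = 1)
    (hn : 3 ≤ Fintype.card H)
    (q : Fin m → H → A) (c : Fin m → ℝ) (hc : ∀ i, 0 < c i)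
    (cmin cmax : ℝ)
    (hcmin : IsLeast (Set.range c) cmin) (hcmax : IsGreatest (Set.range c) cmax)
    (eps : ℝ) (heps : eps = cmin / (cmax * (Fintype.card H : ℝ) ^ 3))
    (hj : H) (hhj : 1 / (Fintype.card H : ℝ) ≤ π hj)
    (π' : H → ℝ)
    (hπ' : ∀ h : H, π' h =
      (if π h < eps then eps else π h) -
        (if h = hj then ∑ h' ∈ Finset.univ.filter (fun h'' => π h'' < eps), (eps - π h')
          else 0))
    (Tg : QTree m H A) (hTg : IsGreedy q c π' Tg Finset.univ) :
    ∀ T : QTree m H A, ValidOn q T Finset.univ →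
      treeCost q c Tg π ≤
        108 * treeCost q c T π *
          Real.log ((Fintype.card H : ℝ) * cmax / cmin) := by
  intro T hT
  obtain ⟨⟨i₀, rfl⟩, hcmin_le⟩ := hcmin
  have hc0 : ∀ i, 0 ≤ c i := fun i => (hc i).le
  have hcle : ∀ i, c i ≤ cmax := fun i => hcmax.2 ⟨i, rfl⟩
  have hπ0 : ∀ h, 0 ≤ π h := fun h => (hπpos h).le
  have hN : (3 : ℝ) ≤ Fintype.card H := by exact_mod_cast hn
  have hε : 0 < eps := heps ▸ div_pos (hc i₀) (by have := (hc i₀).trans_le (hcle i₀); positivity)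
  have hhj' : 3 * Fintype.card H * eps ≤ π hj :=
    (heps ▸ three_mul_mul_div_le_inv hN (hc i₀) (hcle i₀)).trans hhj
  obtain rfl : π' = roundUp π eps hj := funext hπ'
  have hπ'ε := le_roundUp hπ0 hε.le hhj'
  obtain ⟨T', hT'valid, hT'cost⟩ := exists_validOn_treeCost_le_two_mul hc0
    (fun i => hcmin_le ⟨i, rfl⟩) hcle hπ0 hπsum hε.le (roundUp_le_add hπ0 hε.le)
    (heps ▸ div_mul_mul_sub_one_le hN (hc i₀) (hcle i₀)) (by omega) hT
  have hgreedy := treeCost_greedy_le hc (by rw [sum_roundUp, hπsum]) hε hπ'ε (by omega) hTg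
    hT'valid
  have hlog := heps ▸ one_sub_log_two_mul_sq_le hN (hc i₀) (hcle i₀)
  have hL := one_le_log_mul_div hN (hc i₀) (hcle i₀)
  have hC : 0 ≤ treeCost q c T π := partialCost_nonneg hc0 hπ0 T univ
  have hC' : 0 ≤ treeCost q c T' (roundUp π eps hj) :=
    partialCost_nonneg hc0 (fun h => hε.le.trans (hπ'ε h)) T' univ
  calc treeCost q c Tg π ≤ 3 / 2 * treeCost q c Tg (roundUp π eps hj) :=
        treeCost_le_mul hc0 Tg (le_three_halves_mul_roundUp hπ0 hε.le hhj')
    _ ≤ 3 / 2 * (2 * treeCost q c T π * (7 * Real.log (Fintype.card H * cmax / c i₀))) := by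
        gcongr
        exact hgreedy.trans (mul_le_mul_of_nonneg hT'cost hlog hC' (by linarith))
    _ ≤ 108 * treeCost q c T π * Real.log (Fintype.card H * cmax / c i₀) := by
        nlinarith [mul_nonneg hC (zero_le_one.trans hL)]

/-- For `n = |H| ≥ 3`, the greedy query tree `T^g` built for the rounded
distribution `π'` satisfies `C(T^g, π) ≤ 108 · C* · ln( n · c_max / c_min )`, where `C*`
is the minimum cost over all query trees whose leaves are `H` (formalized: the bound holds
against every such tree). -/
theorem rounded_greedy_cost_bound [Fintype H] [Fintype A] [DecidableEq H] [DecidableEq A]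
    (π : H → ℝ) (hπpos : ∀ h, 0 < π h) (hπsum : ∑ h : H, π h = 1)
    (hn : 3 ≤ Fintype.card H)
    (q : Fin m → H → A) (c : Fin m → ℝ) (hc : ∀ i, 0 < c i)
    (hdist : ∀ h h' : H, h ≠ h' → ∃ i : Fin m, q i h ≠ q i h')
    (cmin cmax : ℝ)
    (hcmin : IsLeast (Set.range c) cmin) (hcmax : IsGreatest (Set.range c) cmax)
    (eps : ℝ) (heps : eps = cmin / (cmax * (Fintype.card H : ℝ) ^ 3))
    (hj : H) (hhj : 1 / (Fintype.card H : ℝ) ≤ π hj)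
    (π' : H → ℝ)
    (hπ' : ∀ h : H, π' h =
      (if π h < eps then eps else π h) -
        (if h = hj then ∑ h' ∈ Finset.univ.filter (fun h'' => π h'' < eps), (eps - π h')
          else 0))
    (Tg : QTree m H A) (hTg : IsGreedy q c π' Tg Finset.univ) :
    ∀ T : QTree m H A, ValidOn q T Finset.univ →
      treeCost q c Tg π ≤
        108 * treeCost q c T π *
          Real.log ((Fintype.card H : ℝ) * cmax / cmin) :=
  rounded_greedy_cost_bound_general π hπpos hπsum hn q c hc cmin cmax hcmin hcmax eps heps hj hhj π'
    hπ' Tg hTg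

end ActiveLearning
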